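/- arXiv:1805.05133 — 9 statements merged into one kernel-verified Lean document; each statement's English description precedes it below -/
import Mathlib

section
/- Let X ∈ ℝ^{n×p} with rank(X) = n, let β⁰ ∈ ℝ^p with support S⁰ = {j : β⁰_j ≠ 0}, and let ε ∈ ℝⁿ and y = Xβ⁰ + ε. Assume X satisfies the stable null space property with respect to S⁰ with constant ρ ∈ (0,1). Let β̂(y) be a basis pursuit solution for (X, y) and β̂(ε) a basis pursuit solution for (X, ε), and set β⁰_min = min{|β⁰_j| : j ∈ S⁰}. If β⁰_min > C_ρ‖β̂(ε)‖₁ with C_ρ = 2(3+ρ)/(1−ρ), then there exists a threshold τ > 0 such that for every j ∉ S⁰ one has |β̂_j(y)| ≤ τ, and for every j ∈ S⁰ one has |β̂_j(y)| > τ and sign(β̂_j(y)) = sign(β⁰_j); that is, hard-thresholding the basis pursuit solution at level τ recovers the sign pattern of β⁰ exactly. -/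
/-- A basis pursuit solution for `(X, y)`: a vector `b` with `X b = y` minimizing the ℓ1-norm
among all solutions of `X β = y`. -/
def IsBPSol {n p : ℕ} (X : Matrix (Fin n) (Fin p) ℝ) (y : Fin n → ℝ) (b : Fin p → ℝ) : Prop :=
  X.mulVec b = y ∧ ∀ β : Fin p → ℝ, X.mulVec β = y → ∑ j, |b j| ≤ ∑ j, |β j|

/-- The stable null space property of `X` with respect to `S` with constant `ρ`. -/
def SNSP {n p : ℕ} (X : Matrix (Fin n) (Fin p) ℝ) (S : Finset (Fin p)) (ρ : ℝ) : Prop :=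
  ∀ β : Fin p → ℝ, X.mulVec β = 0 → ∑ j ∈ S, |β j| ≤ ρ * ∑ j ∈ Sᶜ, |β j|

theorem stmt0 {n p : ℕ} (X : Matrix (Fin n) (Fin p) ℝ) (hrank : X.rank = n)
    (β0 : Fin p → ℝ) (S : Finset (Fin p)) (hS : ∀ j, j ∈ S ↔ β0 j ≠ 0)
    (ε y : Fin n → ℝ) (hy : y = X.mulVec β0 + ε)
    (ρ : ℝ) (hρ : ρ ∈ Set.Ioo (0 : ℝ) 1) (hnsp : SNSP X S ρ)
    (bY bE : Fin p → ℝ) (hbY : IsBPSol X y bY) (hbE : IsBPSol X ε bE)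
    (hmin : ∀ j ∈ S, 2 * (3 + ρ) / (1 - ρ) * (∑ k, |bE k|) < |β0 j|) :
    ∃ τ > (0 : ℝ), (∀ j ∉ S, |bY j| ≤ τ) ∧
      ∀ j ∈ S, τ < |bY j| ∧ Real.sign (bY j) = Real.sign (β0 j) := by
  obtain ⟨hρ0, hρ1⟩ := hρ
  have h1ρ : (0:ℝ) < 1 - ρ := by linarith
  set E := ∑ k, |bE k| with hEdef
  have hE0 : (0:ℝ) ≤ E := Finset.sum_nonneg fun k _ => abs_nonneg _
  set h : Fin p → ℝ := bY - β0 - bE with hhdef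
  have hval : ∀ j, h j = bY j - β0 j - bE j := fun j => rfl
  have hker : X.mulVec h = 0 := by
    rw [hhdef, Matrix.mulVec_sub, Matrix.mulVec_sub, hbY.1, hbE.1, hy]
    abel
  have hnspA : ∑ j ∈ S, |h j| ≤ ρ * ∑ j ∈ Sᶜ, |h j| := hnsp h hker
  have hbp : ∑ j, |bY j| ≤ ∑ j, |β0 j + bE j| := by
    apply hbY.2 (β0 + bE)
    show X.mulVec (β0 + bE) = y
    rw [Matrix.mulVec_add, hbE.1, hy]
  have hzero : ∀ j ∉ S, β0 j = 0 := fun j hj => by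
    by_contra hc; exact hj ((hS j).2 hc)
  set A := ∑ j ∈ S, |h j| with hAdef
  set B := ∑ j ∈ Sᶜ, |h j| with hBdef
  have hA0 : (0:ℝ) ≤ A := Finset.sum_nonneg fun k _ => abs_nonneg _
  have hB0 : (0:ℝ) ≤ B := Finset.sum_nonneg fun k _ => abs_nonneg _
  -- sum splits
  have splitY : ∑ j ∈ S, |bY j| + ∑ j ∈ Sᶜ, |bY j| = ∑ j, |bY j| :=
    Finset.sum_add_sum_compl S _
  have splitE : ∑ j ∈ S, |bE j| + ∑ j ∈ Sᶜ, |bE j| = E :=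
    Finset.sum_add_sum_compl S _
  have splitB0 : ∑ j ∈ S, |β0 j| + ∑ j ∈ Sᶜ, |β0 j| = ∑ j, |β0 j| :=
    Finset.sum_add_sum_compl S _
  have hB0c : ∑ j ∈ Sᶜ, |β0 j| = 0 := by
    apply Finset.sum_eq_zero
    intro j hj
    rw [hzero j (Finset.mem_compl.mp hj)]
    simp
  have hsum1 : ∑ j ∈ S, |β0 j| - ∑ j ∈ S, |bE j| - A ≤ ∑ j ∈ S, |bY j| := by
    have hpt : ∀ j ∈ S, |β0 j| - |bE j| - |h j| ≤ |bY j| := by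
      intro j _
      have e1 : β0 j = bY j - (bE j + h j) := by rw [hval]; ring
      have t1 : |bY j - (bE j + h j)| ≤ |bY j| + |bE j + h j| := abs_sub _ _
      have t2 : |bE j + h j| ≤ |bE j| + |h j| := abs_add_le _ _
      rw [e1]; linarith
    have := Finset.sum_le_sum hpt
    rw [hAdef]
    simpa [Finset.sum_sub_distrib] using this
  have hsum2 : B - ∑ j ∈ Sᶜ, |bE j| ≤ ∑ j ∈ Sᶜ, |bY j| := by
    have hpt : ∀ j ∈ Sᶜ, |h j| - |bE j| ≤ |bY j| := by
      intro j hj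
      have e1 : h j = bY j - bE j := by
        rw [hval, hzero j (Finset.mem_compl.mp hj)]; ring
      have t1 : |bY j - bE j| ≤ |bY j| + |bE j| := abs_sub _ _
      rw [e1]; linarith
    have := Finset.sum_le_sum hpt
    rw [hBdef]
    simpa [Finset.sum_sub_distrib] using this
  have hsum3 : ∑ j, |β0 j + bE j| ≤ ∑ j ∈ S, |β0 j| + E := by
    have hpt : ∀ j ∈ (Finset.univ : Finset (Fin p)), |β0 j + bE j| ≤ |β0 j| + |bE j| :=
      fun j _ => abs_add_le _ _
    have := Finset.sum_le_sum hpt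
    rw [Finset.sum_add_distrib] at this
    calc ∑ j, |β0 j + bE j| ≤ ∑ j, |β0 j| + E := this
      _ = ∑ j ∈ S, |β0 j| + E := by rw [← splitB0, hB0c]; ring
  have hkey : B ≤ A + 2 * E := by linarith
  have hBle : (1 - ρ) * B ≤ 2 * E := by nlinarith
  set D := (3 + ρ) / (1 - ρ) * E with hDdef
  have hD0 : (0:ℝ) ≤ D := mul_nonneg (div_nonneg (by linarith) (by linarith)) hE0
  have hD : ∀ j, |bY j - β0 j| ≤ D := by
    intro j
    have e1 : bY j - β0 j = h j + bE j := by rw [hval]; ring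
    have t1 : |h j + bE j| ≤ |h j| + |bE j| := abs_add_le _ _
    have t2 : |h j| ≤ A + B := by
      rcases Finset.mem_coe.mpr (Finset.mem_univ j) with _
      by_cases hj : j ∈ S
      · have := Finset.single_le_sum (f := fun k => |h k|)
          (fun k _ => abs_nonneg _) hj
        rw [← hAdef] at this
        linarith
      · have := Finset.single_le_sum (f := fun k => |h k|)
          (fun k _ => abs_nonneg _) (Finset.mem_compl.mpr hj)
        rw [← hBdef] at this
        linarith
    have t3 : |bE j| ≤ E := Finset.single_le_sum (f := fun k => |bE k|)
      (fun k _ => abs_nonneg _) (Finset.mem_univ j)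
    have t4 : A + B + E ≤ D := by
      rw [hDdef, div_mul_eq_mul_div, le_div_iff₀ h1ρ]
      nlinarith
    rw [e1]; linarith
  have hmin2 : ∀ j ∈ S, 2 * D < |β0 j| := by
    intro j hj
    have := hmin j hj
    have e : 2 * (3 + ρ) / (1 - ρ) * E = 2 * D := by rw [hDdef]; ring
    linarith [e ▸ this]
  rcases S.eq_empty_or_nonempty with hSe | hSne
  · refine ⟨D + 1, by linarith, ?_, ?_⟩
    · intro j _
      have h0 : β0 j = 0 := hzero j (by simp [hSe])
      have := hD j
      rw [h0, sub_zero] at this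
      linarith
    · intro j hj
      rw [hSe] at hj
      exact absurd hj (Finset.notMem_empty j)
  · set m := S.inf' hSne (fun j => |β0 j|) with hm
    obtain ⟨j0, hj0, hj0eq⟩ := S.exists_mem_eq_inf' hSne (fun j => |β0 j|)
    have hmD : 2 * D < m := by
      rw [hm, hj0eq]
      exact hmin2 j0 hj0
    have hmle : ∀ j ∈ S, m ≤ |β0 j| := fun j hj => Finset.inf'_le _ hj
    refine ⟨m / 2, by linarith, ?_, ?_⟩
    · intro j hj
      have h0 : β0 j = 0 := hzero j hj
      have := hD j
      rw [h0, sub_zero] at this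
      linarith
    · intro j hj
      have hj1 : m ≤ |β0 j| := hmle j hj
      have hj2 := hD j
      have habs : |β0 j| - |bY j| ≤ |bY j - β0 j| := by
        have := abs_sub_abs_le_abs_sub (β0 j) (bY j)
        rwa [abs_sub_comm] at this
      refine ⟨by linarith, ?_⟩
      have hlt : |bY j - β0 j| < |β0 j| := by linarith
      obtain ⟨hl, hr⟩ := abs_lt.mp hlt
      rcases lt_trichotomy (β0 j) 0 with hneg | hz | hpos
      · have hb : bY j < 0 := by
          have := abs_of_neg hneg
          linarith
        rw [Real.sign_of_neg hb, Real.sign_of_neg hneg]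
      · exact absurd hz ((hS j).1 hj)
      · have hb : 0 < bY j := by
          have := abs_of_pos hpos
          linarith
        rw [Real.sign_of_pos hb, Real.sign_of_pos hpos]
end

section
/- Let X ∈ ℝ^{n×p}, let β⁰ ∈ ℝ^p with support S⁰ = {j : β⁰_j ≠ 0}, let ε ∈ ℝⁿ and y = Xβ⁰ + ε. Assume X satisfies the stable null space property with respect to S⁰ with constant ρ ∈ (0,1). Let β̂(y) be a basis pursuit solution for (X, y) and β̂(ε) a basis pursuit solution for (X, ε). Then for every j ∈ {1,…,p}, |β̂_j(y) − β⁰_j| ≤ ((3+ρ)/(1−ρ))‖β̂(ε)‖₁. -/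
theorem stmt1 {n p : ℕ} (X : Matrix (Fin n) (Fin p) ℝ)
    (β0 : Fin p → ℝ) (S : Finset (Fin p)) (hS : ∀ j, j ∈ S ↔ β0 j ≠ 0)
    (ε y : Fin n → ℝ) (hy : y = X.mulVec β0 + ε)
    (ρ : ℝ) (hρ : ρ ∈ Set.Ioo (0 : ℝ) 1) (hnsp : SNSP X S ρ)
    (bY bE : Fin p → ℝ) (hbY : IsBPSol X y bY) (hbE : IsBPSol X ε bE) :
    ∀ j, |bY j - β0 j| ≤ (3 + ρ) / (1 - ρ) * ∑ k, |bE k| := by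
  obtain ⟨hρ0, hρ1⟩ := hρ
  have h1ρ : (0:ℝ) < 1 - ρ := by linarith
  intro j
  set v : Fin p → ℝ := fun k => bY k - β0 k with hv
  have hβ0c : ∀ k ∈ Sᶜ, β0 k = 0 := by
    intro k hk
    by_contra h
    exact (Finset.mem_compl.mp hk) ((hS k).mpr h)
  -- the difference v - bE is in the kernel
  have hker : X.mulVec (fun k => v k - bE k) = 0 := by
    have heq : (fun k => v k - bE k) = bY - (β0 + bE) := by
      funext k; simp [hv]; ring
    rw [heq, Matrix.mulVec_sub, Matrix.mulVec_add, hbY.1, hbE.1, hy]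
    abel
  have hnspv := hnsp _ hker
  set A := ∑ k ∈ S, |v k| with hA
  set B := ∑ k ∈ Sᶜ, |v k| with hB
  set ES := ∑ k ∈ S, |bE k| with hES
  set EC := ∑ k ∈ Sᶜ, |bE k| with hEC
  have hAnn : 0 ≤ A := Finset.sum_nonneg fun _ _ => abs_nonneg _
  have hBnn : 0 ≤ B := Finset.sum_nonneg fun _ _ => abs_nonneg _
  have hESnn : 0 ≤ ES := Finset.sum_nonneg fun _ _ => abs_nonneg _
  have hECnn : 0 ≤ EC := Finset.sum_nonneg fun _ _ => abs_nonneg _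
  -- inequality (i): A - ES ≤ ρ * (B + EC)
  have h1 : A - ES ≤ ρ * (B + EC) := by
    have l1 : A - ES ≤ ∑ k ∈ S, |v k - bE k| := by
      rw [hA, hES, ← Finset.sum_sub_distrib]
      exact Finset.sum_le_sum fun k _ => abs_sub_abs_le_abs_sub _ _
    have l2 : ∑ k ∈ Sᶜ, |v k - bE k| ≤ B + EC := by
      rw [hB, hEC, ← Finset.sum_add_distrib]
      exact Finset.sum_le_sum fun k _ => abs_sub _ _
    calc A - ES ≤ ∑ k ∈ S, |v k - bE k| := l1
      _ ≤ ρ * ∑ k ∈ Sᶜ, |v k - bE k| := hnspv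
      _ ≤ ρ * (B + EC) := by
          exact mul_le_mul_of_nonneg_left l2 hρ0.le
  -- inequality (ii): B ≤ A + (ES + EC), from BP minimality
  have h2 : B ≤ A + (ES + EC) := by
    have hXβE : X.mulVec (β0 + bE) = y := by
      rw [Matrix.mulVec_add, hbE.1, hy]
    have hmin := hbY.2 _ hXβE
    have hup : ∑ k, |bY k| ≤ ∑ k, |β0 k| + (ES + EC) := by
      have : ∑ k, |(β0 + bE) k| ≤ ∑ k, (|β0 k| + |bE k|) :=
        Finset.sum_le_sum fun k _ => abs_add_le _ _
      have hsplit : ∑ k, |bE k| = ES + EC := by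
        rw [hES, hEC, Finset.sum_add_sum_compl]
      rw [Finset.sum_add_distrib, hsplit] at this
      linarith [hmin, this]
    have hβ0sum : ∑ k, |β0 k| = ∑ k ∈ S, |β0 k| := by
      rw [← Finset.sum_add_sum_compl S fun k => |β0 k|]
      have : ∑ k ∈ Sᶜ, |β0 k| = 0 :=
        Finset.sum_eq_zero fun k hk => by rw [hβ0c k hk, abs_zero]
      rw [this, add_zero]
    have hbYsplit : ∑ k, |bY k| = ∑ k ∈ S, |bY k| + ∑ k ∈ Sᶜ, |bY k| :=
      (Finset.sum_add_sum_compl S fun k => |bY k|).symm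
    have hSc : ∑ k ∈ Sᶜ, |bY k| = B := by
      rw [hB]
      refine Finset.sum_congr rfl fun k hk => ?_
      simp [hv, hβ0c k hk]
    have hSlow : ∑ k ∈ S, |β0 k| - A ≤ ∑ k ∈ S, |bY k| := by
      rw [hA, ← Finset.sum_sub_distrib]
      refine Finset.sum_le_sum fun k _ => ?_
      have h := abs_sub (bY k) (v k)
      have : bY k - v k = β0 k := by rw [hv]; ring
      rw [this] at h
      linarith
    linarith [hup, hβ0sum ▸ hup, hbYsplit, hSc, hSlow]
  -- combine
  have hBbd : (1 - ρ) * B ≤ 2 * ES + (1 + ρ) * EC := by nlinarith [h1, h2]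
  have hAbd : (1 - ρ) * A ≤ (1 + ρ) * ES + 2 * ρ * EC := by
    nlinarith [mul_le_mul_of_nonneg_left hBbd hρ0.le,
      mul_le_mul_of_nonneg_left h1 h1ρ.le, mul_nonneg hρ0.le hECnn]
  have hj : |bY j - β0 j| ≤ A + B := by
    have h0 : |bY j - β0 j| = |v j| := rfl
    have h1' : |v j| ≤ ∑ k, |v k| :=
      Finset.single_le_sum (f := fun k => |v k|) (fun _ _ => abs_nonneg _) (Finset.mem_univ j)
    have h2' : ∑ k, |v k| = A + B := by
      rw [hA, hB, Finset.sum_add_sum_compl]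
    rw [h0]; linarith
  have hEsplit : ∑ k, |bE k| = ES + EC := by
    rw [hES, hEC, Finset.sum_add_sum_compl]
  rw [hEsplit, div_mul_eq_mul_div, le_div_iff₀ h1ρ]
  nlinarith [hAbd, hBbd, mul_le_mul_of_nonneg_right hj h1ρ.le,
    mul_nonneg h1ρ.le hECnn, mul_nonneg h1ρ.le hESnn]
end

section
/- Let X ∈ ℝ^{n×p}, let β⁰ ∈ ℝ^p with support S⁰ = {j : β⁰_j ≠ 0}, let ε ∈ ℝⁿ and y = Xβ⁰ + ε. Assume X satisfies the stable null space property with respect to S⁰ with constant ρ ∈ (0,1). Let β̂(y) be a basis pursuit solution for (X, y) and β̂(ε) a basis pursuit solution for (X, ε). Then ‖β̂(y) − (β⁰ + β̂(ε))‖₁ ≤ (2(1+ρ)/(1−ρ))‖β̂(ε)‖₁. -/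
lemma abs_lb' (a b : ℝ) : |a| - |b| ≤ |a + b| := by
  have h := abs_add_le (a + b) (-b)
  rw [abs_neg] at h
  simp only [add_neg_cancel_right] at h
  linarith

theorem stmt2 {n p : ℕ} (X : Matrix (Fin n) (Fin p) ℝ)
    (β0 : Fin p → ℝ) (S : Finset (Fin p)) (hS : ∀ j, j ∈ S ↔ β0 j ≠ 0)
    (ε y : Fin n → ℝ) (hy : y = X.mulVec β0 + ε)
    (ρ : ℝ) (hρ : ρ ∈ Set.Ioo (0 : ℝ) 1) (hnsp : SNSP X S ρ)
    (bY bE : Fin p → ℝ) (hbY : IsBPSol X y bY) (hbE : IsBPSol X ε bE) :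
    ∑ j, |bY j - (β0 j + bE j)| ≤ 2 * (1 + ρ) / (1 - ρ) * ∑ k, |bE k| := by
  obtain ⟨hρ0, hρ1⟩ := hρ
  set h : Fin p → ℝ := fun j => bY j - (β0 j + bE j) with hhdef
  -- h is in the kernel of X
  have hXh : X.mulVec h = 0 := by
    have heq : h = bY - (β0 + bE) := by funext j; simp [hhdef]
    rw [heq, Matrix.mulVec_sub, Matrix.mulVec_add, hbY.1, hbE.1, hy, sub_self]
  have hnspA : ∑ j ∈ S, |h j| ≤ ρ * ∑ j ∈ Sᶜ, |h j| := hnsp h hXh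
  -- optimality of bY
  have hopt : ∑ j, |bY j| ≤ ∑ j, |β0 j + bE j| := by
    have := hbY.2 (β0 + bE) (by rw [Matrix.mulVec_add, hbE.1, hy])
    simpa using this
  -- β0 vanishes off S
  have hβ0 : ∀ j ∈ Sᶜ, β0 j = 0 := by
    intro j hj
    have := (hS j).mp
    by_contra hne
    exact (Finset.mem_compl.mp hj) ((hS j).mpr hne)
  -- abbreviations
  have split : ∀ f : Fin p → ℝ, ∑ j ∈ S, f j + ∑ j ∈ Sᶜ, f j = ∑ j, f j :=
    fun f => Finset.sum_add_sum_compl S f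
  have key1 : ∑ j ∈ S, |β0 j| - ∑ j ∈ S, |bE j| - ∑ j ∈ S, |h j| ≤ ∑ j ∈ S, |bY j| := by
    have : ∑ j ∈ S, (|β0 j| - |bE j| - |h j|) ≤ ∑ j ∈ S, |bY j| := by
      refine Finset.sum_le_sum fun j _ => ?_
      have hb : bY j = β0 j + bE j + h j := by simp [hhdef]
      rw [hb]
      have h1 : |β0 j| - |bE j| ≤ |β0 j + bE j| := abs_lb' _ _
      have h2 : |β0 j + bE j| - |h j| ≤ |β0 j + bE j + h j| := abs_lb' _ _
      linarith
    calc ∑ j ∈ S, |β0 j| - ∑ j ∈ S, |bE j| - ∑ j ∈ S, |h j|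
        = ∑ j ∈ S, (|β0 j| - |bE j| - |h j|) := by
          rw [Finset.sum_sub_distrib, Finset.sum_sub_distrib]
      _ ≤ _ := this
  have key2 : ∑ j ∈ Sᶜ, |h j| - ∑ j ∈ Sᶜ, |bE j| ≤ ∑ j ∈ Sᶜ, |bY j| := by
    have : ∑ j ∈ Sᶜ, (|h j| - |bE j|) ≤ ∑ j ∈ Sᶜ, |bY j| := by
      refine Finset.sum_le_sum fun j hj => ?_
      have hb : bY j = bE j + h j := by simp [hhdef, hβ0 j hj]
      rw [hb]
      have h1 : |h j| - |bE j| ≤ |h j + bE j| := abs_lb' _ _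
      rw [add_comm (bE j) (h j)]
      linarith
    calc ∑ j ∈ Sᶜ, |h j| - ∑ j ∈ Sᶜ, |bE j| = ∑ j ∈ Sᶜ, (|h j| - |bE j|) := by
          rw [Finset.sum_sub_distrib]
      _ ≤ _ := this
  have key3 : ∑ j, |β0 j + bE j| ≤ ∑ j, |β0 j| + ∑ j, |bE j| := by
    rw [← Finset.sum_add_distrib]
    exact Finset.sum_le_sum fun j _ => abs_add_le _ _
  have key4 : ∑ j, |β0 j| = ∑ j ∈ S, |β0 j| := by
    rw [← split (fun j => |β0 j|)]
    have : ∑ j ∈ Sᶜ, |β0 j| = 0 := Finset.sum_eq_zero fun j hj => by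
      rw [hβ0 j hj, abs_zero]
    rw [this, add_zero]
  -- Combine: B ≤ A + 2E
  have hsplitY := split (fun j => |bY j|)
  have hsplitE := split (fun j => |bE j|)
  have hsplitH := split (fun j => |h j|)
  have hB : ∑ j ∈ Sᶜ, |h j| ≤ ∑ j ∈ S, |h j| + 2 * ∑ k, |bE k| := by linarith
  have hEnn : (0:ℝ) ≤ ∑ k, |bE k| := Finset.sum_nonneg fun _ _ => abs_nonneg _
  have hgoal : ∑ j, |h j| ≤ 2 * (1 + ρ) / (1 - ρ) * ∑ k, |bE k| := by
    rw [div_mul_eq_mul_div, le_div_iff₀ (by linarith : (0:ℝ) < 1 - ρ)]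
    nlinarith [mul_le_mul_of_nonneg_left hB (by linarith : (0:ℝ) ≤ ρ)]
  exact hgoal
end

section
/- Let X ∈ ℝ^{n×p}, let β⁰ ∈ ℝ^p whose support is contained in a set S⁰ ⊆ {1,…,p}, let ε ∈ ℝⁿ and y = Xβ⁰ + ε. Assume X satisfies the stable null space property with respect to S⁰ with constant ρ ∈ (0,1). Let β̂(y) be a basis pursuit solution for (X, y) and β̂(ε) a basis pursuit solution for (X, ε). Then ‖(β̂(y) − β̂(ε))_{S⁰ᶜ}‖₁ ≤ (2/(1−ρ))‖β̂(ε)_{S⁰ᶜ}‖₁, where v_{S⁰ᶜ} denotes the subvector of v indexed by the complement of S⁰. -/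
theorem stmt3 {n p : ℕ} (X : Matrix (Fin n) (Fin p) ℝ)
    (β0 : Fin p → ℝ) (S : Finset (Fin p)) (hS : ∀ j, β0 j ≠ 0 → j ∈ S)
    (ε y : Fin n → ℝ) (hy : y = X.mulVec β0 + ε)
    (ρ : ℝ) (hρ : ρ ∈ Set.Ioo (0 : ℝ) 1) (hnsp : SNSP X S ρ)
    (bY bE : Fin p → ℝ) (hbY : IsBPSol X y bY) (hbE : IsBPSol X ε bE) :
    ∑ j ∈ Sᶜ, |bY j - bE j| ≤ 2 / (1 - ρ) * ∑ j ∈ Sᶜ, |bE j| := by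
  obtain ⟨hρ0, hρ1⟩ := hρ
  set v : Fin p → ℝ := fun j => bY j - β0 j - bE j with hv
  have hXv : X.mulVec v = 0 := by
    have : v = bY - (β0 + bE) := by funext j; simp [hv]; ring
    rw [this, Matrix.mulVec_sub, Matrix.mulVec_add, hbY.1, hbE.1, hy]
    abel
  have hnspv := hnsp v hXv
  -- feasibility of β0 + bE
  have hfeas : X.mulVec (β0 + bE) = y := by
    rw [Matrix.mulVec_add, hbE.1, hy]
  have hopt := hbY.2 (β0 + bE) hfeas
  -- β0 vanishes on Sᶜ
  have hβ0 : ∀ j ∈ Sᶜ, β0 j = 0 := by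
    intro j hj
    by_contra h
    exact (Finset.mem_compl.mp hj) (hS j h)
  -- on Sᶜ, v j = bY j - bE j
  have hsum_eq : ∑ j ∈ Sᶜ, |bY j - bE j| = ∑ j ∈ Sᶜ, |v j| := by
    apply Finset.sum_congr rfl
    intro j hj
    simp [hv, hβ0 j hj]
  -- split total sums
  have hsplit : ∀ f : Fin p → ℝ, ∑ j ∈ S, f j + ∑ j ∈ Sᶜ, f j = ∑ j, f j :=
    fun f => Finset.sum_add_sum_compl S f
  have h1 : ∑ j ∈ S, |β0 j + bE j| - ∑ j ∈ S, |v j| ≤ ∑ j ∈ S, |bY j| := by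
    rw [← Finset.sum_sub_distrib]
    apply Finset.sum_le_sum
    intro j _
    have : bY j = (β0 j + bE j) + v j := by simp only [hv]; ring
    rw [this]
    have := abs_add_le (β0 j + bE j) (-(v j))
    simp at this
    calc |β0 j + bE j| - |v j| ≤ |β0 j + bE j + v j| - |v j| + |v j| := by
          have h := abs_sub_abs_le_abs_sub (β0 j + bE j) (-(v j))
          simp only [sub_neg_eq_add, abs_neg] at h
          linarith
      _ = |β0 j + bE j + v j| := by ring
  have h2 : ∑ j ∈ Sᶜ, |v j| - ∑ j ∈ Sᶜ, |bE j| ≤ ∑ j ∈ Sᶜ, |bY j| := by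
    rw [← Finset.sum_sub_distrib]
    apply Finset.sum_le_sum
    intro j hj
    have hb : bY j = bE j + v j := by simp only [hv]; rw [hβ0 j hj]; ring
    rw [hb]
    have h := abs_sub_abs_le_abs_sub (v j) (-(bE j))
    simp only [sub_neg_eq_add, abs_neg] at h
    have hc : |bE j + v j| = |v j + bE j| := by rw [add_comm]
    linarith
  have h3 : ∑ j ∈ Sᶜ, |β0 j + bE j| = ∑ j ∈ Sᶜ, |bE j| := by
    apply Finset.sum_congr rfl
    intro j hj
    rw [hβ0 j hj, zero_add]
  have hoptS : ∑ j ∈ S, |bY j| + ∑ j ∈ Sᶜ, |bY j|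
      ≤ ∑ j ∈ S, |β0 j + bE j| + ∑ j ∈ Sᶜ, |bE j| := by
    rw [hsplit (fun j => |bY j|), ← h3, hsplit (fun j => |β0 j + bE j|)]
    simpa using hopt
  -- combine: (1-ρ) * ∑_{Sᶜ} |v| ≤ 2 * ∑_{Sᶜ} |bE|
  have hkey : (1 - ρ) * ∑ j ∈ Sᶜ, |v j| ≤ 2 * ∑ j ∈ Sᶜ, |bE j| := by nlinarith
  rw [hsum_eq, div_mul_eq_mul_div, le_div_iff₀ (by linarith : (0:ℝ) < 1 - ρ)]
  linarith
end

section
/- Let X ∈ ℝ^{n×p}, y ∈ ℝⁿ, and let β̂ be a basis pursuit solution for (X, y). Then for every subset S ⊆ {1,…,p} and every β ∈ ℝ^p with Xβ = y, one has ‖(β̂ − β)_{Sᶜ}‖₁ ≤ ‖(β̂ − β)_S‖₁ + 2‖β_{Sᶜ}‖₁, where v_S denotes the subvector of v indexed by S and Sᶜ the complement of S in {1,…,p}. -/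
theorem stmt4 {n p : ℕ} (X : Matrix (Fin n) (Fin p) ℝ) (y : Fin n → ℝ) (b : Fin p → ℝ)
    (hb : IsBPSol X y b) (S : Finset (Fin p)) (β : Fin p → ℝ) (hβ : X.mulVec β = y) :
    ∑ j ∈ Sᶜ, |b j - β j| ≤ ∑ j ∈ S, |b j - β j| + 2 * ∑ j ∈ Sᶜ, |β j| := by
  have h := hb.2 β hβ
  rw [← Finset.sum_add_sum_compl S (fun j => |b j|),
      ← Finset.sum_add_sum_compl S (fun j => |β j|)] at h
  have h1 : ∑ j ∈ S, (|β j| - |b j - β j|) ≤ ∑ j ∈ S, |b j| := by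
    apply Finset.sum_le_sum
    intro j _
    have : |β j| ≤ |b j| + |b j - β j| := by
      calc |β j| = |b j - (b j - β j)| := by ring_nf
        _ ≤ |b j| + |b j - β j| := abs_sub _ _
    linarith
  have h2 : ∑ j ∈ Sᶜ, (|b j - β j| - |β j|) ≤ ∑ j ∈ Sᶜ, |b j| := by
    apply Finset.sum_le_sum
    intro j _
    have := abs_sub (b j) (β j)
    linarith
  rw [Finset.sum_sub_distrib] at h1 h2
  linarith
end

section
/- Let X ∈ ℝ^{n×p}, let S⁰ ⊆ {1,…,p} be such that the Gram matrix X_{S⁰}ᵀX_{S⁰} is invertible, and let θ ∈ (0,1). Assume the θ-uniform irrepresentable condition holds: for every vector τ_{S⁰} ∈ ℝ^{|S⁰|} with ‖τ_{S⁰}‖_∞ ≤ 1, ‖X_{S⁰ᶜ}ᵀ X_{S⁰} (X_{S⁰}ᵀ X_{S⁰})⁻¹ τ_{S⁰}‖_∞ < θ. Then for every ρ ∈ (θ, 1), X satisfies the stable null space property with respect to S⁰ with constant ρ. -/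
open Matrix

lemma real_sign_mul_self (x : ℝ) : Real.sign x * x = |x| := by
  rcases lt_trichotomy x 0 with h | h | h
  · rw [Real.sign_of_neg h, abs_of_neg h]; ring
  · simp [h]
  · rw [Real.sign_of_pos h, abs_of_pos h]; ring

lemma abs_sign_le (x : ℝ) : |Real.sign x| ≤ 1 := by
  rcases lt_trichotomy x 0 with h | h | h
  · rw [Real.sign_of_neg h]; norm_num
  · simp [h]
  · rw [Real.sign_of_pos h]; norm_num


lemma sum_subtype_memS {p : ℕ} (S : Finset (Fin p)) (f : Fin p → ℝ) :
    ∑ j : {j : Fin p // j ∈ S}, f j = ∑ j ∈ S, f j := by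
  convert (Finset.sum_subtype S (fun x => Iff.rfl) f).symm using 2

lemma sum_subtype_notMemS {p : ℕ} (S : Finset (Fin p)) (f : Fin p → ℝ) :
    ∑ j : {j : Fin p // j ∉ S}, f j = ∑ j ∈ Sᶜ, f j := by
  convert (Finset.sum_subtype Sᶜ (fun x => Finset.mem_compl) f).symm using 2

theorem stmt5 {n p : ℕ} (X : Matrix (Fin n) (Fin p) ℝ) (S : Finset (Fin p)) (θ : ℝ)
    (hθ : θ ∈ Set.Ioo (0 : ℝ) 1)
    -- the submatrices of `X` with columns indexed by `S` and its complement
    (Xs : Matrix (Fin n) {j : Fin p // j ∈ S} ℝ)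
    (hXs : Xs = X.submatrix id (fun j : {j : Fin p // j ∈ S} => (j : Fin p)))
    (Xc : Matrix (Fin n) {j : Fin p // j ∉ S} ℝ)
    (hXc : Xc = X.submatrix id (fun j : {j : Fin p // j ∉ S} => (j : Fin p)))
    -- the Gram matrix is invertible
    (hGram : IsUnit (Xsᵀ * Xs))
    -- the θ-uniform irrepresentable condition
    (hIR : ∀ t : {j : Fin p // j ∈ S} → ℝ, (∀ j, |t j| ≤ 1) →
      ∀ i : {j : Fin p // j ∉ S}, |(Xcᵀ * Xs * (Xsᵀ * Xs)⁻¹).mulVec t i| < θ) :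
    ∀ ρ ∈ Set.Ioo θ 1, SNSP X S ρ := by
  rintro ρ ⟨hρθ, hρ1⟩ β hβ
  set βS : {j : Fin p // j ∈ S} → ℝ := fun j => β j with hβSdef
  set βc : {j : Fin p // j ∉ S} → ℝ := fun j => β j with hβcdef
  -- split the kernel equation
  have hsplit : Xs.mulVec βS + Xc.mulVec βc = 0 := by
    funext i
    have h0 : X.mulVec β i = 0 := by rw [hβ]; rfl
    have hS : ∑ j : {j : Fin p // j ∈ S}, X i j * β j = ∑ j ∈ S, X i j * β j :=
      sum_subtype_memS S (fun j => X i j * β j)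
    have hSc : ∑ j : {j : Fin p // j ∉ S}, X i j * β j = ∑ j ∈ Sᶜ, X i j * β j :=
      sum_subtype_notMemS S (fun j => X i j * β j)
    have hsum : ∑ j ∈ S, X i j * β j + ∑ j ∈ Sᶜ, X i j * β j = ∑ j : Fin p, X i j * β j :=
      Finset.sum_add_sum_compl S _
    simp only [Pi.add_apply, Pi.zero_apply, hXs, hXc, mulVec, dotProduct,
      submatrix_apply, id_eq]
    rw [hβSdef, hβcdef, hS, hSc, hsum]
    simpa [mulVec, dotProduct] using h0
  have hdet : IsUnit (Xsᵀ * Xs).det := (isUnit_iff_isUnit_det _).mp hGram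
  have hinv : (Xsᵀ * Xs)⁻¹ * (Xsᵀ * Xs) = 1 := nonsing_inv_mul _ hdet
  -- solve for βS
  have h1 : (Xsᵀ * Xs).mulVec βS = -((Xsᵀ * Xc).mulVec βc) := by
    have h := congrArg (Xsᵀ.mulVec) hsplit
    rw [Matrix.mulVec_add, Matrix.mulVec_zero, Matrix.mulVec_mulVec,
      Matrix.mulVec_mulVec] at h
    linear_combination (norm := module) h
  have hkey : βS = -(((Xsᵀ * Xs)⁻¹ * Xsᵀ * Xc).mulVec βc) := by
    calc βS = ((Xsᵀ * Xs)⁻¹ * (Xsᵀ * Xs)).mulVec βS := by rw [hinv, Matrix.one_mulVec]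
    _ = (Xsᵀ * Xs)⁻¹.mulVec ((Xsᵀ * Xs).mulVec βS) := by rw [Matrix.mulVec_mulVec]
    _ = (Xsᵀ * Xs)⁻¹.mulVec (-((Xsᵀ * Xc).mulVec βc)) := by rw [h1]
    _ = -(((Xsᵀ * Xs)⁻¹ * Xsᵀ * Xc).mulVec βc) := by
        rw [Matrix.mulVec_neg, Matrix.mulVec_mulVec, Matrix.mul_assoc]
  -- the sign vector
  set τ : {j : Fin p // j ∈ S} → ℝ := fun j => Real.sign (βS j) with hτdef
  have hτ : ∀ j, |τ j| ≤ 1 := fun j => abs_sign_le _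
  set v : {j : Fin p // j ∉ S} → ℝ := (Xcᵀ * Xs * (Xsᵀ * Xs)⁻¹).mulVec τ with hvdef
  have hv : ∀ i, |v i| < θ := hIR τ hτ
  -- transpose identity
  have htr : ((Xsᵀ * Xs)⁻¹ * Xsᵀ * Xc)ᵀ = Xcᵀ * Xs * (Xsᵀ * Xs)⁻¹ := by
    simp [Matrix.transpose_mul, Matrix.transpose_nonsing_inv, Matrix.mul_assoc]
  -- main computation
  have hsumS : ∑ j ∈ S, |β j| = ∑ j : {j : Fin p // j ∈ S}, |βS j| :=
    sum_subtype_memS S _ |>.symm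
  have hsumSc : ∑ j ∈ Sᶜ, |β j| = ∑ i : {j : Fin p // j ∉ S}, |βc i| :=
    sum_subtype_notMemS S _ |>.symm
  have hdot : ∑ j : {j : Fin p // j ∈ S}, |βS j| = -(∑ i, v i * βc i) := by
    have e1 : ∑ j : {j : Fin p // j ∈ S}, |βS j| = τ ⬝ᵥ βS := by
      simp only [dotProduct, hτdef]
      exact Finset.sum_congr rfl fun j _ => (real_sign_mul_self _).symm
    rw [e1, hkey, dotProduct_neg, Matrix.dotProduct_mulVec, ← Matrix.mulVec_transpose, htr,
      ← hvdef]
    rfl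
  rw [hsumS, hsumSc, hdot]
  have step1 : -(∑ i, v i * βc i) ≤ ∑ i, |v i| * |βc i| := by
    rw [← Finset.sum_neg_distrib]
    apply Finset.sum_le_sum
    intro i _
    calc -(v i * βc i) ≤ |v i * βc i| := neg_le_abs _
    _ = |v i| * |βc i| := abs_mul _ _
  have step2 : ∑ i, |v i| * |βc i| ≤ θ * ∑ i, |βc i| := by
    rw [Finset.mul_sum]
    apply Finset.sum_le_sum
    intro i _
    exact mul_le_mul_of_nonneg_right (le_of_lt (hv i)) (abs_nonneg _)
  have step3 : θ * ∑ i, |βc i| ≤ ρ * ∑ i, |βc i| :=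
    mul_le_mul_of_nonneg_right (le_of_lt hρθ)
      (Finset.sum_nonneg fun i _ => abs_nonneg _)
  linarith
end

section
/- Let X ∈ ℝ^{n×p}, S⁰ ⊆ {1,…,p} nonempty, and ρ ∈ (0,1). Assume the (1/ρ, S⁰)-compatibility condition holds: there exists φ² > 0 such that every β ∈ ℝ^p with ‖β_{S⁰ᶜ}‖₁ ≤ (1/ρ)‖β_{S⁰}‖₁ satisfies ‖β_{S⁰}‖₁² ≤ (|S⁰|/(n φ²))‖Xβ‖₂². Then X satisfies the stable null space property with respect to S⁰ with constant ρ. -/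
theorem stmt6 {n p : ℕ} (X : Matrix (Fin n) (Fin p) ℝ) (S : Finset (Fin p))
    (hSne : S.Nonempty) (ρ : ℝ) (hρ : ρ ∈ Set.Ioo (0 : ℝ) 1)
    -- the (1/ρ, S)-compatibility condition
    (hcompat : ∃ φ2 : ℝ, 0 < φ2 ∧ ∀ β : Fin p → ℝ,
      (∑ j ∈ Sᶜ, |β j|) ≤ (1 / ρ) * ∑ j ∈ S, |β j| →
      (∑ j ∈ S, |β j|) ^ 2 ≤ (S.card : ℝ) / (n * φ2) * ∑ i, (X.mulVec β i) ^ 2) :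
    SNSP X S ρ := by
  obtain ⟨φ2, hφ2, hc⟩ := hcompat
  obtain ⟨hρ0, hρ1⟩ := hρ
  intro β hβ
  by_contra h
  push_neg at h
  have hSnn : (0:ℝ) ≤ ∑ j ∈ S, |β j| := Finset.sum_nonneg fun j _ => abs_nonneg _
  have hScnn : (0:ℝ) ≤ ∑ j ∈ Sᶜ, |β j| := Finset.sum_nonneg fun j _ => abs_nonneg _
  have hSc : (∑ j ∈ Sᶜ, |β j|) ≤ (1 / ρ) * ∑ j ∈ S, |β j| := by
    rw [div_mul_eq_mul_div, le_div_iff₀ hρ0]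
    nlinarith
  have h0 : (∑ j ∈ S, |β j|) ^ 2 ≤ 0 := by
    have := hc β hSc
    rw [hβ] at this
    simpa using this
  nlinarith [mul_nonneg hρ0.le hScnn]
end

section
/- Let X ∈ ℝ^{n×p} with n ≤ p, suppose XXᵀ is invertible, and let s > 0 be such that uᵀ(XXᵀ)u ≥ s²‖u‖₂² for all u ∈ ℝⁿ. Then for every ε ∈ ℝⁿ and every basis pursuit solution β̂ for (X, ε), one has ‖β̂‖₁ ≤ √p · ‖ε‖₂ / s. -/
open Matrix

theorem stmt13 {n p : ℕ} (hnp : n ≤ p) (X : Matrix (Fin n) (Fin p) ℝ)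
    (hinv : IsUnit (X * Xᵀ)) (s : ℝ) (hs : 0 < s)
    (hlb : ∀ u : Fin n → ℝ, s ^ 2 * ∑ i, u i ^ 2 ≤ u ⬝ᵥ (X * Xᵀ).mulVec u)
    (ε : Fin n → ℝ) (b : Fin p → ℝ) (hb : IsBPSol X ε b) :
    ∑ j, |b j| ≤ Real.sqrt p * Real.sqrt (∑ i, ε i ^ 2) / s := by
  set A := X * Xᵀ with hA
  have hdet : IsUnit A.det := (Matrix.isUnit_iff_isUnit_det A).mp hinv
  set u : Fin n → ℝ := A⁻¹.mulVec ε with hu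
  set β : Fin p → ℝ := Xᵀ.mulVec u with hβ
  have hAu : A.mulVec u = ε := by
    rw [hu, Matrix.mulVec_mulVec, Matrix.mul_nonsing_inv _ hdet, Matrix.one_mulVec]
  have hXβ : X.mulVec β = ε := by
    rw [hβ, Matrix.mulVec_mulVec]; exact hAu
  set E : ℝ := Real.sqrt (∑ i, ε i ^ 2) with hE
  have hEnn : 0 ≤ E := Real.sqrt_nonneg _
  set t : ℝ := Real.sqrt (∑ i, u i ^ 2) with ht
  have htnn : 0 ≤ t := Real.sqrt_nonneg _
  have ht2 : t ^ 2 = ∑ i, u i ^ 2 := Real.sq_sqrt (by positivity)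
  -- Cauchy–Schwarz : u ⬝ᵥ ε ≤ t * E
  have hCS : u ⬝ᵥ ε ≤ t * E := by
    have h := Finset.sum_mul_sq_le_sq_mul_sq Finset.univ u ε
    have h2 : (u ⬝ᵥ ε) ^ 2 ≤ (t * E) ^ 2 := by
      rw [mul_pow, ht2, hE, Real.sq_sqrt (by positivity)]
      simpa [dotProduct] using h
    calc u ⬝ᵥ ε ≤ |u ⬝ᵥ ε| := le_abs_self _
    _ = Real.sqrt ((u ⬝ᵥ ε) ^ 2) := (Real.sqrt_sq_eq_abs _).symm
    _ ≤ Real.sqrt ((t * E) ^ 2) := Real.sqrt_le_sqrt h2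
    _ = t * E := Real.sqrt_sq (by positivity)
  -- quadratic form lower bound
  have hq : s ^ 2 * t ^ 2 ≤ u ⬝ᵥ ε := by
    rw [ht2]
    have := hlb u
    rwa [hAu] at this
  have hβ2 : ∑ j, β j ^ 2 = u ⬝ᵥ ε := by
    have : ∑ j, β j ^ 2 = β ⬝ᵥ β := by
      simp [dotProduct, sq]
    rw [this, hβ, Matrix.dotProduct_mulVec, Matrix.vecMul_transpose,
      Matrix.mulVec_mulVec]
    rw [show X * Xᵀ = A from rfl, hAu, dotProduct_comm]
  -- bound t ≤ E / s^2
  have htE : s ^ 2 * t ≤ E := by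
    rcases eq_or_lt_of_le htnn with h0 | h0
    · rw [← h0]; simpa using hEnn
    · have : s ^ 2 * t * t ≤ E * t := by
        calc s ^ 2 * t * t = s ^ 2 * t ^ 2 := by ring
        _ ≤ u ⬝ᵥ ε := hq
        _ ≤ t * E := hCS
        _ = E * t := by ring
      exact le_of_mul_le_mul_right this h0
  have hβ2le : ∑ j, β j ^ 2 ≤ (E / s) ^ 2 := by
    have h1 : u ⬝ᵥ ε ≤ t * E := hCS
    have h2 : s ^ 2 * (∑ j, β j ^ 2) ≤ s ^ 2 * (t * E) := by
      exact mul_le_mul_of_nonneg_left (hβ2 ▸ h1) (by positivity)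
    have h3 : s ^ 2 * (t * E) ≤ E * E := by
      calc s ^ 2 * (t * E) = (s ^ 2 * t) * E := by ring
      _ ≤ E * E := mul_le_mul_of_nonneg_right htE hEnn
    have h4 : s ^ 2 * (∑ j, β j ^ 2) ≤ E * E := le_trans h2 h3
    rw [div_pow, le_div_iff₀ (by positivity)]
    calc (∑ j, β j ^ 2) * s ^ 2 = s ^ 2 * (∑ j, β j ^ 2) := by ring
    _ ≤ E * E := h4
    _ = E ^ 2 := by ring
  -- ℓ1 ≤ √p ℓ2 for β
  have hl1 : ∑ j, |β j| ≤ Real.sqrt p * Real.sqrt (∑ j, β j ^ 2) := by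
    have hcs := Finset.sum_mul_sq_le_sq_mul_sq Finset.univ
      (fun j : Fin p => |β j|) (fun _ => (1 : ℝ))
    have h2 : (∑ j, |β j|) ^ 2 ≤ (∑ j, β j ^ 2) * p := by
      simpa [sq_abs, Finset.card_univ] using hcs
    calc ∑ j, |β j| = Real.sqrt ((∑ j, |β j|) ^ 2) :=
        (Real.sqrt_sq (by positivity)).symm
    _ ≤ Real.sqrt ((∑ j, β j ^ 2) * p) := Real.sqrt_le_sqrt h2
    _ = Real.sqrt p * Real.sqrt (∑ j, β j ^ 2) := by
        rw [Real.sqrt_mul (by positivity), mul_comm]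
  have hsq : Real.sqrt (∑ j, β j ^ 2) ≤ E / s := by
    have := Real.sqrt_le_sqrt hβ2le
    rwa [Real.sqrt_sq (by positivity)] at this
  calc ∑ j, |b j| ≤ ∑ j, |β j| := hb.2 β hXβ
  _ ≤ Real.sqrt p * Real.sqrt (∑ j, β j ^ 2) := hl1
  _ ≤ Real.sqrt p * (E / s) := mul_le_mul_of_nonneg_left hsq (Real.sqrt_nonneg _)
  _ = Real.sqrt p * E / s := by ring
end

section
/- Let n < p, let X ∈ ℝ^{n×p} be a fixed matrix with XXᵀ invertible and smallest singular value σ_min(X) ≥ (γ√n/2)(√(p/n) − 1) for some γ > 0, and let ε ∈ ℝⁿ be a random vector with i.i.d. N(0,σ²) entries, σ > 0. Then P(‖Xᵀ(XXᵀ)⁻¹ε‖₂ > 2√2 σ/(γ(√(p/n) − 1))) ≤ 1.14^{−n}. -/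
open MeasureTheory ProbabilityTheory Matrix

/-- The smallest singular value of an `n × p` matrix (`n ≤ p`):
the infimum of `‖Mᵀ u‖₂` over unit vectors `u ∈ ℝⁿ`. -/
noncomputable def sMin {n p : ℕ} (M : Matrix (Fin n) (Fin p) ℝ) : ℝ :=
  sInf {r : ℝ | ∃ u : Fin n → ℝ, (∑ i, u i ^ 2) = 1 ∧
    r = Real.sqrt (∑ j, (Mᵀ.mulVec u j) ^ 2)}

/-
The vector `y = Xᵀ(XXᵀ)⁻¹ε` solves `Xy = ε` and lies in the row space of `X`, so
`‖y‖² = ⟪(XXᵀ)⁻¹ε, ε⟫ ≤ ‖(XXᵀ)⁻¹ε‖ ‖ε‖ ≤ ‖y‖ ‖ε‖ / σ_min(X)`, i.e. `σ_min(X) ‖y‖ ≤ ‖ε‖`.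
With the assumed lower bound on `σ_min(X)` the event forces `‖ε‖² > 2nσ²`, twice the mean of
`‖ε‖²`. A Chernoff bound with `E exp(εᵢ² / (4σ²)) = √2` gives probability at most
`(√2 / √e)ⁿ ≤ 1.14⁻ⁿ`, since `2 · 1.14² < e`.
-/

open Real NNReal

section GaussianSquareMoment

variable {v : ℝ≥0}

lemma gaussianPDFReal_mul_exp_sq_div (hv : v ≠ 0) (x : ℝ) :
    gaussianPDFReal 0 v x * exp (x ^ 2 / (4 * v))
      = (√(2 * π * v))⁻¹ * exp (-(4 * (v : ℝ))⁻¹ * x ^ 2) := by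
  have hv' : (v : ℝ) ≠ 0 := by exact_mod_cast hv
  rw [gaussianPDFReal, sub_zero, mul_assoc, ← exp_add]
  congr 2
  field_simp
  ring

lemma integrable_exp_sq_div_gaussianReal (hv : v ≠ 0) :
    Integrable (fun x ↦ exp (x ^ 2 / (4 * v))) (gaussianReal 0 v) := by
  rw [gaussianReal_of_var_ne_zero _ hv, integrable_withDensity_iff_integrable_smul'
    (measurable_gaussianPDF _ _) (ae_of_all _ fun _ ↦ gaussianPDF_lt_top)]
  simp_rw [gaussianPDF, ENNReal.toReal_ofReal (gaussianPDFReal_nonneg _ _ _), smul_eq_mul,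
    gaussianPDFReal_mul_exp_sq_div hv]
  exact (integrable_exp_neg_mul_sq (by positivity)).const_mul _

lemma integral_exp_sq_div_gaussianReal (hv : v ≠ 0) :
    ∫ x, exp (x ^ 2 / (4 * v)) ∂gaussianReal 0 v = √2 := by
  simp_rw [integral_gaussianReal_eq_integral_smul hv, smul_eq_mul,
    gaussianPDFReal_mul_exp_sq_div hv]
  rw [integral_const_mul, integral_gaussian, div_inv_eq_mul,
    show π * (4 * v) = 2 * (2 * π * v) by ring, sqrt_mul zero_le_two, mul_comm √2,
    inv_mul_cancel_left₀ (by positivity)]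

end GaussianSquareMoment

/-- Chernoff bound at twice the mean, with exponent `t = 1 / (4v)`. -/
lemma pi_gaussianReal_sum_sq_tail_le {ι : Type*} [Fintype ι] {v : ℝ≥0} (hv : v ≠ 0) :
    Measure.pi (fun _ : ι ↦ gaussianReal 0 v) {e | 2 * Fintype.card ι * (v : ℝ) < ∑ i, e i ^ 2}
      ≤ ENNReal.ofReal ((√2 / exp (1 / 2)) ^ Fintype.card ι) := by
  set d := Fintype.card ι
  let f (x : ℝ) := exp (x ^ 2 / (4 * v))
  have hf_int : Integrable (fun e : ι → ℝ ↦ ∏ i, f (e i)) (Measure.pi fun _ ↦ gaussianReal 0 v) :=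
    Integrable.fintype_prod fun _ ↦ integrable_exp_sq_div_gaussianReal hv
  have hf_integral : ∫ e, ∏ i, f (e i) ∂(Measure.pi fun _ : ι ↦ gaussianReal 0 v) = √2 ^ d := by
    rw [integral_fintype_prod_eq_pow, integral_exp_sq_div_gaussianReal hv]
  have hsub : {e : ι → ℝ | 2 * d * v < ∑ i, e i ^ 2} ⊆ {e | exp (d / 2) ≤ ∏ i, f (e i)} := by
    intro e he
    have hv' : (0 : ℝ) < 4 * v := by positivity
    simp only [Set.mem_ofPred_eq, f, ← exp_sum, exp_le_exp, ← Finset.sum_div,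
      le_div_iff₀ hv'] at he ⊢
    linarith
  have hmarkov := mul_meas_ge_le_integral_of_nonneg (ae_of_all _ fun e ↦ by positivity) hf_int
    (exp (d / 2))
  rw [hf_integral, ← le_div_iff₀' (exp_pos _)] at hmarkov
  refine (measure_mono hsub).trans
    ((ENNReal.le_ofReal_iff_toReal_le (measure_ne_top _ _) (by positivity)).2 ?_)
  rwa [div_pow, ← exp_nat_mul, mul_one_div]

lemma sqrt_two_div_exp_half_le : √2 / exp (1 / 2) ≤ (1.14 : ℝ)⁻¹ := by
  have he : (2.5992 : ℝ) < exp 1 := lt_trans (by norm_num) exp_one_gt_d9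
  rw [div_le_iff₀ (exp_pos _), ← div_eq_inv_mul, le_div_iff₀ (by norm_num),
    ← sqrt_sq (by norm_num : (0 : ℝ) ≤ 1.14), ← sqrt_mul zero_le_two, exp_half]
  exact sqrt_le_sqrt (by norm_num; linarith)

lemma sqrt_sum_sq_eq_norm {ι : Type*} [Fintype ι] (x : ι → ℝ) :
    √(∑ i, x i ^ 2) = ‖WithLp.toLp 2 x‖ := by
  simp [EuclideanSpace.norm_eq]

section SmallestSingularValue

variable {n p : ℕ}

lemma sMin_nonneg (M : Matrix (Fin n) (Fin p) ℝ) : 0 ≤ sMin M :=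
  Real.sInf_nonneg fun _ ⟨_, _, hr⟩ ↦ hr ▸ Real.sqrt_nonneg _

lemma sMin_le_norm_transpose_mulVec (M : Matrix (Fin n) (Fin p) ℝ) {u : Fin n → ℝ}
    (hu : ‖WithLp.toLp 2 u‖ = 1) : sMin M ≤ ‖WithLp.toLp 2 (Mᵀ *ᵥ u)‖ := by
  refine csInf_le ⟨0, fun _ ⟨_, _, hr⟩ ↦ hr ▸ Real.sqrt_nonneg _⟩ ⟨u, ?_, ?_⟩
  · simpa [hu] using (EuclideanSpace.real_norm_sq_eq (WithLp.toLp 2 u)).symm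
  · rw [sqrt_sum_sq_eq_norm]

lemma sMin_mul_norm_le_norm_transpose_mulVec (M : Matrix (Fin n) (Fin p) ℝ) (w : Fin n → ℝ) :
    sMin M * ‖WithLp.toLp 2 w‖ ≤ ‖WithLp.toLp 2 (Mᵀ *ᵥ w)‖ := by
  rcases eq_or_ne w 0 with rfl | hw
  · simp
  have hw' : 0 < ‖WithLp.toLp 2 w‖ := by simpa using hw
  have hunit := sMin_le_norm_transpose_mulVec M (u := ‖WithLp.toLp 2 w‖⁻¹ • w)
    (by rw [WithLp.toLp_smul, norm_smul, norm_inv, norm_norm, inv_mul_cancel₀ hw'.ne'])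
  rw [mulVec_smul, WithLp.toLp_smul, norm_smul, norm_inv, norm_norm] at hunit
  rwa [le_inv_mul_iff₀ hw', mul_comm] at hunit

lemma sMin_mul_norm_le_of_mulVec_eq (M : Matrix (Fin n) (Fin p) ℝ) {w : Fin n → ℝ}
    {e : Fin n → ℝ} (h : M *ᵥ (Mᵀ *ᵥ w) = e) :
    sMin M * ‖WithLp.toLp 2 (Mᵀ *ᵥ w)‖ ≤ ‖WithLp.toLp 2 e‖ := by
  set y := Mᵀ *ᵥ w
  have hy : ‖WithLp.toLp 2 y‖ ^ 2 ≤ ‖WithLp.toLp 2 w‖ * ‖WithLp.toLp 2 e‖ := calc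
    ‖WithLp.toLp 2 y‖ ^ 2 = w ⬝ᵥ e := by
      rw [← real_inner_self_eq_norm_sq, EuclideanSpace.inner_toLp_toLp, star_trivial, ← h,
        dotProduct_mulVec, ← mulVec_transpose, transpose_transpose, dotProduct_comm]
    _ = inner ℝ (WithLp.toLp 2 e) (WithLp.toLp 2 w) := by
      rw [EuclideanSpace.inner_toLp_toLp, star_trivial]
    _ ≤ _ := by rw [mul_comm]; exact real_inner_le_norm _ _
  rcases (norm_nonneg (WithLp.toLp 2 y)).eq_or_lt with hy0 | hy0
  · rw [← hy0, mul_zero]; exact norm_nonneg _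
  refine le_of_mul_le_mul_right ?_ hy0
  calc sMin M * ‖WithLp.toLp 2 y‖ * ‖WithLp.toLp 2 y‖
      = sMin M * ‖WithLp.toLp 2 y‖ ^ 2 := by ring
    _ ≤ sMin M * ‖WithLp.toLp 2 w‖ * ‖WithLp.toLp 2 e‖ := by
      rw [mul_assoc]; exact mul_le_mul_of_nonneg_left hy (sMin_nonneg M)
    _ ≤ ‖WithLp.toLp 2 y‖ * ‖WithLp.toLp 2 e‖ := by
      gcongr; exact sMin_mul_norm_le_norm_transpose_mulVec M w
    _ = _ := mul_comm _ _

lemma sMin_mul_norm_pinv_mulVec_le (M : Matrix (Fin n) (Fin p) ℝ) (hM : IsUnit (M * Mᵀ))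
    (e : Fin n → ℝ) :
    sMin M * ‖WithLp.toLp 2 ((Mᵀ * (M * Mᵀ)⁻¹) *ᵥ e)‖ ≤ ‖WithLp.toLp 2 e‖ := by
  rw [← mulVec_mulVec]
  refine sMin_mul_norm_le_of_mulVec_eq M ?_
  rw [mulVec_mulVec, mulVec_mulVec,
    mul_nonsing_inv _ ((isUnit_iff_isUnit_det _).mp hM), one_mulVec]

end SmallestSingularValue

theorem stmt15 (n p : ℕ) (hnp : n < p) (X : Matrix (Fin n) (Fin p) ℝ)
    (hinv : IsUnit (X * Xᵀ)) (γ σ : ℝ) (hγ : 0 < γ) (hσ : 0 < σ)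
    (hsmin : γ * Real.sqrt n / 2 * (Real.sqrt ((p : ℝ) / n) - 1) ≤ sMin X) :
    (Measure.pi fun _ : Fin n => gaussianReal 0 ⟨σ ^ 2, sq_nonneg σ⟩)
      {e : Fin n → ℝ |
        2 * Real.sqrt 2 * σ / (γ * (Real.sqrt ((p : ℝ) / n) - 1)) <
          Real.sqrt (∑ j, ((Xᵀ * (X * Xᵀ)⁻¹).mulVec e j) ^ 2)}
      ≤ ENNReal.ofReal ((1.14 : ℝ) ^ (-(n : ℤ))) := by
  rcases n.eq_zero_or_pos with rfl | hn
  · exact (measure_mono (Set.subset_univ _)).trans (by simp)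
  have hr : 0 < √((p : ℝ) / n) - 1 := by
    rw [sub_pos, lt_sqrt zero_le_one, one_pow, one_lt_div (by positivity)]
    exact_mod_cast hnp
  have hvar : (⟨σ ^ 2, sq_nonneg σ⟩ : ℝ≥0) ≠ 0 := by
    simpa [← NNReal.coe_ne_zero] using hσ.ne'
  have hsMin : 0 < sMin X := hsmin.trans_lt' (by positivity)
  refine (measure_mono fun e he ↦ ?_).trans ((pi_gaussianReal_sum_sq_tail_le hvar).trans ?_)
  · simp only [Set.mem_ofPred_eq, sqrt_sum_sq_eq_norm, Fintype.card_fin] at he ⊢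
    have hthreshold : √2 * √n * σ
        = γ * √n / 2 * (√((p : ℝ) / n) - 1) * (2 * √2 * σ / (γ * (√((p : ℝ) / n) - 1))) := by
      field_simp
    have hnorm : √2 * √n * σ < ‖WithLp.toLp 2 e‖ := calc
      _ = _ := hthreshold
      _ < sMin X * ‖WithLp.toLp 2 ((Xᵀ * (X * Xᵀ)⁻¹) *ᵥ e)‖ :=
        mul_lt_mul' hsmin he (by positivity) hsMin
      _ ≤ _ := sMin_mul_norm_pinv_mulVec_le X hinv e
    -- `simp` cannot see through the coercion of the anonymous-constructor variance
    show 2 * n * σ ^ 2 < ∑ i, e i ^ 2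
    simpa [mul_pow, EuclideanSpace.real_norm_sq_eq] using
      pow_lt_pow_left₀ hnorm (by positivity) two_ne_zero
  · rw [Fintype.card_fin, _root_.zpow_neg, zpow_natCast, ← inv_pow]
    exact ENNReal.ofReal_le_ofReal (pow_le_pow_left₀ (by positivity) sqrt_two_div_exp_half_le n)
end
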